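/- Let V be a finite set, N : V → Finset V with i ∉ N i and j ∈ N i ↔ i ∈ N j for all i, j ∈ V, f : V → V → ℝ symmetric with f i j = 1 whenever j ∉ N i, and b : V → ℝ. For i ∈ V and M ⊆ V define μ_i(M) = ∏_{j ∈ M \ {i}} f i j and W(M) = Σ_{i ∈ M} μ_i(M) · b_i. Define N_G(i) = ( N i ∪ ⋃_{j ∈ N i} N j ) \ {i}, and let D ⊆ V satisfy N_G(i) ∩ D = ∅ for every i ∈ D. For B ⊆ V \ D and i ∈ D set p_i(B) = exp(W(B ∪ {i})) / ( exp(W(B ∪ {i})) + exp(W(B)) ). Then for every B ⊆ V \ D and every A ⊆ D: exp(W(B ∪ A)) / ( Σ_{A' ⊆ D} exp(W(B ∪ A')) ) = ( ∏_{i ∈ A} p_i(B) ) · ( ∏_{i ∈ D \ A} (1 − p_i(B)) ). -/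

import Mathlib

/-!
A link of a decision schedule `D` interacts with no other link of `D`, neither directly nor
through a common neighbour. So for `k ∉ D` at most one factor of `∏_{j ∈ A} f k j` (`A ⊆ D`)
differs from `1`, and the product equals `1 + ∑_{j ∈ A} (f k j - 1)`. Hence adding `A` to a
configuration `B` outside `D` changes the weight `W` by the sum of the changes caused by adding
the links of `A` one at a time; `A ↦ exp (W (B ∪ A))` is then multiplicative on subsets of `D`,
and normalising it over the powerset of `D` gives a product of independent Bernoulli laws.
-/

open Finset Real

theorem Finset.prod_eq_one_add_sum_sub_one {ι R : Type*} [CommRing R] {s : Finset ι} {g : ι → R}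
    (h : ∀ i ∈ s, ∀ j ∈ s, i ≠ j → g i = 1 ∨ g j = 1) :
    ∏ i ∈ s, g i = 1 + ∑ i ∈ s, (g i - 1) := by
  by_cases hs : ∃ i ∈ s, g i ≠ 1
  · obtain ⟨i, hi, hgi⟩ := hs
    have hrest : ∀ j ∈ s, j ≠ i → g j = 1 := fun j hj hji =>
      (h i hi j hj hji.symm).resolve_left hgi
    rw [prod_eq_single_of_mem i hi hrest,
      sum_eq_single_of_mem i hi fun j hj hji => sub_eq_zero.2 (hrest j hj hji)]
    ring
  · push Not at hs
    rw [prod_eq_one hs, sum_eq_zero fun i hi => sub_eq_zero.2 (hs i hi), add_zero]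

theorem Finset.prod_div_prod_one_add {ι K : Type*} [DecidableEq ι] [Field K]
    {x : ι → K} {A D : Finset ι} (hA : A ⊆ D) (hx : ∀ i ∈ D, 1 + x i ≠ 0) :
    (∏ i ∈ A, x i) / ∏ i ∈ D, (1 + x i) =
      (∏ i ∈ A, x i / (1 + x i)) * ∏ i ∈ D \ A, (1 - x i / (1 + x i)) := by
  have hcompl : ∀ i ∈ D \ A, 1 - x i / (1 + x i) = 1 / (1 + x i) := fun i hi => by
    field_simp [hx i (mem_sdiff.1 hi).1]; ring
  rw [prod_congr rfl hcompl, ← prod_sdiff hA, prod_div_distrib, prod_div_distrib,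
    prod_const_one]
  have hA0 : ∏ i ∈ A, (1 + x i) ≠ 0 := prod_ne_zero_iff.2 fun i hi => hx i (hA hi)
  have hDA0 : ∏ i ∈ D \ A, (1 + x i) ≠ 0 :=
    prod_ne_zero_iff.2 fun i hi => hx i (mem_sdiff.1 hi).1
  field_simp

theorem Real.exp_div_sum_powerset_eq_prod_of_additive {ι : Type*} [DecidableEq ι]
    (w : Finset ι → ℝ) {D : Finset ι}
    (hw : ∀ A ⊆ D, w A = w ∅ + ∑ i ∈ A, (w {i} - w ∅)) {A : Finset ι} (hA : A ⊆ D) :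
    exp (w A) / ∑ A' ∈ D.powerset, exp (w A') =
      (∏ i ∈ A, exp (w {i}) / (exp (w {i}) + exp (w ∅))) *
        ∏ i ∈ D \ A, (1 - exp (w {i}) / (exp (w {i}) + exp (w ∅))) := by
  set x : ι → ℝ := fun i => exp (w {i} - w ∅)
  have hexp : ∀ A ⊆ D, exp (w A) = exp (w ∅) * ∏ i ∈ A, x i := fun A hA => by
    rw [hw A hA, exp_add, exp_sum]
  have hsum : ∑ A' ∈ D.powerset, exp (w A') = exp (w ∅) * ∏ i ∈ D, (1 + x i) := by
    rw [prod_one_add, mul_sum]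
    exact sum_congr rfl fun A' hA' => hexp A' (mem_powerset.1 hA')
  have hsingle : ∀ i, exp (w {i}) / (exp (w {i}) + exp (w ∅)) = x i / (1 + x i) := fun i => by
    have hxi : exp (w {i}) = exp (w ∅) * x i := by rw [← exp_add, add_sub_cancel]
    rw [hxi, div_eq_div_iff (by positivity) (by positivity)]
    ring
  simp only [hsingle]
  rw [hexp A hA, hsum, mul_div_mul_left _ _ (exp_pos _).ne']
  exact prod_div_prod_one_add hA fun i _ => by positivity

namespace SpatialCSMA

variable {V : Type*} [DecidableEq V]

section Weight

variable (f : V → V → ℝ) (b : V → ℝ)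

def successProb (i : V) (M : Finset V) : ℝ := ∏ j ∈ M.erase i, f i j

def weight (M : Finset V) : ℝ := ∑ i ∈ M, successProb f i M * b i

def weightGain (B : Finset V) (j : V) : ℝ :=
  successProb f j (insert j B) * b j + ∑ k ∈ B, (f k j - 1) * (successProb f k B * b k)

variable {f}

theorem successProb_union_of_mem_left {B A : Finset V} {k : V} (hk : k ∈ B)
    (hBA : Disjoint B A) :
    successProb f k (B ∪ A) = successProb f k B * ∏ j ∈ A, f k j := by
  have hkA : k ∉ A := disjoint_left.1 hBA hk
  rw [successProb, successProb, erase_union_distrib, erase_eq_of_notMem hkA,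
    prod_union (hBA.mono_left (erase_subset k B))]

theorem successProb_union_of_mem_right {B A : Finset V} {k : V} (hk : k ∈ A)
    (hBA : Disjoint B A) (hA : ∀ j ∈ A, j ≠ k → f k j = 1) :
    successProb f k (B ∪ A) = successProb f k (insert k B) := by
  have hkB : k ∉ B := disjoint_right.1 hBA hk
  rw [successProb, successProb, erase_union_distrib, erase_eq_of_notMem hkB,
    erase_insert hkB, prod_union (hBA.mono_right (erase_subset k A)),
    prod_eq_one fun j hj => hA j (mem_of_mem_erase hj) (ne_of_mem_erase hj), mul_one]

theorem weight_union {B A : Finset V} (hBA : Disjoint B A)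
    (hA : ∀ i ∈ A, ∀ j ∈ A, i ≠ j → f i j = 1)
    (hB : ∀ k ∈ B, ∀ i ∈ A, ∀ j ∈ A, i ≠ j → f k i = 1 ∨ f k j = 1) :
    weight f b (B ∪ A) = weight f b B + ∑ j ∈ A, weightGain f b B j := by
  have hleft : ∑ k ∈ B, successProb f k (B ∪ A) * b k =
      ∑ k ∈ B, successProb f k B * b k +
        ∑ j ∈ A, ∑ k ∈ B, (f k j - 1) * (successProb f k B * b k) := by
    rw [sum_comm, ← sum_add_distrib]
    refine sum_congr rfl fun k hk => ?_
    rw [successProb_union_of_mem_left hk hBA, prod_eq_one_add_sum_sub_one (hB k hk),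
      mul_one_add, add_mul, mul_sum, sum_mul]
    congr 1
    exact sum_congr rfl fun j _ => by ring
  have hright : ∑ k ∈ A, successProb f k (B ∪ A) * b k =
      ∑ j ∈ A, successProb f j (insert j B) * b j :=
    sum_congr rfl fun k hk => by
      rw [successProb_union_of_mem_right hk hBA fun j hj hjk => hA k hk j hj hjk.symm]
  rw [weight, sum_union hBA, hleft, hright, weight]
  simp only [weightGain, sum_add_distrib]
  ring

theorem weight_union_singleton {B : Finset V} {j : V} (hj : j ∉ B) :
    weight f b (B ∪ {j}) = weight f b B + weightGain f b B j := by
  simpa using weight_union b (disjoint_singleton_right.2 hj) (by simp) (by simp)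

end Weight

section Schedule

variable (N : V → Finset V)

def conflictNbhd (i : V) : Finset V := (N i ∪ (N i).biUnion N).erase i

def IsDecisionSchedule (D : Finset V) : Prop := ∀ i ∈ D, Disjoint (conflictNbhd N i) D

variable {N} {D : Finset V} {i j : V}

theorem IsDecisionSchedule.notMem_nbhd (hD : IsDecisionSchedule N D) (hi : i ∈ D)
    (hj : j ∈ D) (hij : i ≠ j) : j ∉ N i := fun hji =>
  disjoint_left.1 (hD i hi) (mem_erase.2 ⟨hij.symm, mem_union_left _ hji⟩) hj

theorem IsDecisionSchedule.notMem_nbhd_of_mem_nbhd (hN : ∀ i j, j ∈ N i ↔ i ∈ N j)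
    (hD : IsDecisionSchedule N D) (hi : i ∈ D) (hj : j ∈ D) (hij : i ≠ j) {k : V}
    (hik : i ∈ N k) : j ∉ N k := fun hjk =>
  disjoint_left.1 (hD i hi)
    (mem_erase.2 ⟨hij.symm, mem_union_right _ (mem_biUnion.2 ⟨k, (hN k i).1 hik, hjk⟩)⟩) hj

theorem weight_union_of_isDecisionSchedule (hN : ∀ i j, j ∈ N i ↔ i ∈ N j)
    {f : V → V → ℝ} (hf : ∀ i j, j ∉ N i → f i j = 1) (b : V → ℝ)
    (hD : IsDecisionSchedule N D) {B A : Finset V} (hBD : Disjoint B D) (hA : A ⊆ D) :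
    weight f b (B ∪ A) = weight f b B + ∑ j ∈ A, (weight f b (B ∪ {j}) - weight f b B) := by
  have hAA : ∀ i ∈ A, ∀ j ∈ A, i ≠ j → f i j = 1 := fun i hi j hj hij =>
    hf i j (hD.notMem_nbhd (hA hi) (hA hj) hij)
  have hBA : ∀ k ∈ B, ∀ i ∈ A, ∀ j ∈ A, i ≠ j → f k i = 1 ∨ f k j = 1 :=
    fun k _ i hi j hj hij => or_iff_not_imp_left.2 fun hki =>
      hf k j (hD.notMem_nbhd_of_mem_nbhd hN (hA hi) (hA hj) hij (not_not.1 (mt (hf k i) hki)))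
  rw [weight_union b (hBD.mono_right hA) hAA hBA]
  congr 1
  exact sum_congr rfl fun j hj => by
    rw [weight_union_singleton b (disjoint_right.1 hBD (hA hj)), add_sub_cancel_left]

end Schedule

end SpatialCSMA

open SpatialCSMA in
theorem spatialCSMA_parallel_update_factorization_general
    {V : Type*} [Fintype V] [DecidableEq V]
    (N : V → Finset V)
    (hN_symm : ∀ i j, j ∈ N i ↔ i ∈ N j)
    (f : V → V → ℝ)
    (hf_one : ∀ i j, j ∉ N i → f i j = 1)
    (b : V → ℝ)
    (μ : V → Finset V → ℝ) (hμ : ∀ k S, μ k S = ∏ j ∈ S.erase k, f k j)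
    (W : Finset V → ℝ) (hW : ∀ S, W S = ∑ k ∈ S, μ k S * b k)
    (NG : V → Finset V) (hNG : ∀ i, NG i = (N i ∪ (N i).biUnion N).erase i)
    (D : Finset V) (hD : ∀ i ∈ D, NG i ∩ D = ∅)
    (p : V → Finset V → ℝ)
    (hp : ∀ i B, p i B = exp (W (B ∪ {i})) / (exp (W (B ∪ {i})) + exp (W B))) :
    ∀ B ⊆ Finset.univ \ D, ∀ A ⊆ D,
      exp (W (B ∪ A)) / (∑ A' ∈ D.powerset, exp (W (B ∪ A')))
        = (∏ i ∈ A, p i B) * ∏ i ∈ D \ A, (1 - p i B) := by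
  intro B hB A hA
  have hW_eq : W = weight f b := funext fun S => by
    simp only [hW, hμ, weight, successProb]
  have hsched : IsDecisionSchedule N D := fun i hi => by
    rw [disjoint_iff_inter_eq_empty, conflictNbhd, ← hNG, hD i hi]
  have hBD : Disjoint B D := (subset_sdiff.1 hB).2
  have hadd : ∀ A' ⊆ D, W (B ∪ A') = W (B ∪ ∅) + ∑ j ∈ A', (W (B ∪ {j}) - W (B ∪ ∅)) :=
    fun A' hA' => by
      rw [union_empty, hW_eq]
      exact weight_union_of_isDecisionSchedule hN_symm hf_one b hsched hBD hA'
  simpa only [hp, union_empty] using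
    exp_div_sum_powerset_eq_prod_of_additive (fun A' => W (B ∪ A')) hadd hA

/-- Joint-law factorization underlying Lemma 3 (parallel updates): for a decision
schedule `D` (i.e. `N_G(i) ∩ D = ∅` for all `i ∈ D`), the conditional distribution of the
configuration on `D` given the configuration `B` outside `D` under the Gibbs measure
`Π(M) ∝ exp(W M)` factorizes into a product of single-site conditional probabilities. -/
theorem spatialCSMA_parallel_update_factorization
    {V : Type*} [Fintype V] [DecidableEq V]
    (N : V → Finset V) (hN_irrefl : ∀ i, i ∉ N i)
    (hN_symm : ∀ i j, j ∈ N i ↔ i ∈ N j)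
    (f : V → V → ℝ) (hf : ∀ i j, f i j = f j i)
    (hf_one : ∀ i j, j ∉ N i → f i j = 1)
    (b : V → ℝ)
    (μ : V → Finset V → ℝ) (hμ : ∀ k S, μ k S = ∏ j ∈ S.erase k, f k j)
    (W : Finset V → ℝ) (hW : ∀ S, W S = ∑ k ∈ S, μ k S * b k)
    (NG : V → Finset V) (hNG : ∀ i, NG i = (N i ∪ (N i).biUnion N).erase i)
    (D : Finset V) (hD : ∀ i ∈ D, NG i ∩ D = ∅)
    (p : V → Finset V → ℝ)
    (hp : ∀ i B, p i B = exp (W (B ∪ {i})) / (exp (W (B ∪ {i})) + exp (W B))) :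
    ∀ B ⊆ Finset.univ \ D, ∀ A ⊆ D,
      exp (W (B ∪ A)) / (∑ A' ∈ D.powerset, exp (W (B ∪ A')))
        = (∏ i ∈ A, p i B) * ∏ i ∈ D \ A, (1 - p i B) :=
  spatialCSMA_parallel_update_factorization_general N hN_symm f hf_one b μ hμ W hW NG hNG D hD p hp
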